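/- arXiv:2507.01958 — 3 statements merged into one kernel-verified Lean document; each statement's English description precedes it below -/
import Mathlib

section
/- Let b : ℝ × ℝ^d → ℝ ∪ {+∞} be defined by b(m,w) = |w|^q/(q m^{q-1}) if m > 0, b(0,0) = 0, and b(m,w) = +∞ otherwise, where q > 1. Then b is a convex function on ℝ × ℝ^d. -/
/-!
On the open half-space `m > 0`, `b(m, w) = m f(w/m)` is the perspective of the convex function
`f = ‖·‖^q / q`. Perspectives of convex functions are convex: with `m = t m₁ + (1 - t) m₂`, the
point `(t w₁ + (1 - t) w₂) / m` is the convex combination of `w₁ / m₁` and `w₂ / m₂` with weights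
`t m₁ / m` and `(1 - t) m₂ / m`. Positive homogeneity of the perspective adds the apex `(0, 0)`,
and setting the function to `+∞` off a convex set where it is convex preserves convexity.
-/

open Set
open scoped Classical

section Perspective

variable {E : Type*} [AddCommGroup E] [Module ℝ E]

/-- Since `0⁻¹ = 0`, this vanishes on `p.1 = 0`, the value `b` takes at the apex. -/
noncomputable def perspective (f : E → ℝ) (p : ℝ × E) : ℝ := p.1 * f (p.1⁻¹ • p.2)

def perspectiveDomain (s : Set E) : Set (ℝ × E) := {p | 0 < p.1 ∧ p.1⁻¹ • p.2 ∈ s}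

theorem perspective_smul (f : E → ℝ) (c : ℝ) (p : ℝ × E) :
    perspective f (c • p) = c * perspective f p := by
  rcases eq_or_ne c 0 with rfl | hc
  · simp [perspective]
  rcases eq_or_ne p.1 0 with hp | hp
  · simp [perspective, hp]
  have hinv : (c * p.1)⁻¹ * c = p.1⁻¹ := by field_simp
  simp only [perspective, Prod.smul_fst, Prod.smul_snd, smul_eq_mul, smul_smul, hinv]
  ring

theorem smul_mem_perspectiveDomain {s : Set E} {c : ℝ} (hc : 0 < c) {p : ℝ × E}
    (hp : p ∈ perspectiveDomain s) : c • p ∈ perspectiveDomain s := by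
  have hinv : (c * p.1)⁻¹ * c = p.1⁻¹ := by field_simp [hp.1.ne']
  refine ⟨mul_pos hc hp.1, ?_⟩
  simpa only [Prod.smul_fst, Prod.smul_snd, smul_eq_mul, smul_smul, hinv] using hp.2

theorem inv_smul_add_smul_eq {a b m₁ m₂ : ℝ} (hm₁ : m₁ ≠ 0) (hm₂ : m₂ ≠ 0)
    (hm : a * m₁ + b * m₂ ≠ 0) (x₁ x₂ : E) :
    (a * m₁ + b * m₂)⁻¹ • (a • x₁ + b • x₂) =
      (a * m₁ / (a * m₁ + b * m₂)) • (m₁⁻¹ • x₁) + (b * m₂ / (a * m₁ + b * m₂)) • (m₂⁻¹ • x₂) := by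
  simp only [smul_add, smul_smul]
  congr 2 <;> field_simp

variable {s : Set E} {f : E → ℝ}

theorem convexOn_perspective (hf : ConvexOn ℝ s f) :
    ConvexOn ℝ (perspectiveDomain s) (perspective f) := by
  have combo : ∀ ⦃p⦄, p ∈ perspectiveDomain s → ∀ ⦃p'⦄, p' ∈ perspectiveDomain s →
      ∀ ⦃a b : ℝ⦄, 0 < a → 0 < b → a • p + b • p' ∈ perspectiveDomain s ∧
        perspective f (a • p + b • p') ≤ a * perspective f p + b * perspective f p' := by
    rintro ⟨m₁, x₁⟩ ⟨hm₁, hx₁⟩ ⟨m₂, x₂⟩ ⟨hm₂, hx₂⟩ a b ha hb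
    have hM : 0 < a * m₁ + b * m₂ := by positivity
    have hw₁ : 0 ≤ a * m₁ / (a * m₁ + b * m₂) := by positivity
    have hw₂ : 0 ≤ b * m₂ / (a * m₁ + b * m₂) := by positivity
    have hsum : a * m₁ / (a * m₁ + b * m₂) + b * m₂ / (a * m₁ + b * m₂) = 1 := by
      field_simp
    have key := inv_smul_add_smul_eq hm₁.ne' hm₂.ne' hM.ne' x₁ x₂
    simp only [perspectiveDomain, perspective, Prod.smul_mk, Prod.mk_add_mk, smul_eq_mul] at *
    refine ⟨⟨hM, key ▸ hf.1 hx₁ hx₂ hw₁ hw₂ hsum⟩, ?_⟩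
    calc (a * m₁ + b * m₂) * f ((a * m₁ + b * m₂)⁻¹ • (a • x₁ + b • x₂))
        ≤ (a * m₁ + b * m₂) * (a * m₁ / (a * m₁ + b * m₂) * f (m₁⁻¹ • x₁)
            + b * m₂ / (a * m₁ + b * m₂) * f (m₂⁻¹ • x₂)) := by
          rw [key]; exact mul_le_mul_of_nonneg_left (hf.2 hx₁ hx₂ hw₁ hw₂ hsum) hM.le
      _ = a * (m₁ * f (m₁⁻¹ • x₁)) + b * (m₂ * f (m₂⁻¹ • x₂)) := by field_simp
  refine convexOn_iff_forall_pos.2 ⟨convex_iff_forall_pos.2 ?_, ?_⟩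
  · exact fun p hp p' hp' a b ha hb _ ↦ (combo hp hp' ha hb).1
  · exact fun p hp p' hp' a b ha hb _ ↦ (combo hp hp' ha hb).2

theorem convexOn_perspective_insert_zero (hf : ConvexOn ℝ s f) :
    ConvexOn ℝ (insert 0 (perspectiveDomain s)) (perspective f) := by
  have combo : ∀ ⦃p⦄, p ∈ insert 0 (perspectiveDomain s) → ∀ ⦃p'⦄,
      p' ∈ insert 0 (perspectiveDomain s) → ∀ ⦃a b : ℝ⦄, 0 < a → 0 < b → a + b = 1 →
        a • p + b • p' ∈ insert 0 (perspectiveDomain s) ∧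
          perspective f (a • p + b • p') ≤ a * perspective f p + b * perspective f p' := by
    rintro p (rfl | hp) p' (rfl | hp') a b ha hb hab
    · simp [perspective]
    · rw [smul_zero, zero_add, perspective_smul]
      exact ⟨Or.inr (smul_mem_perspectiveDomain hb hp'), by simp [perspective]⟩
    · rw [smul_zero, add_zero, perspective_smul]
      exact ⟨Or.inr (smul_mem_perspectiveDomain ha hp), by simp [perspective]⟩
    · exact ⟨Or.inr ((convexOn_perspective hf).1 hp hp' ha.le hb.le hab),
        (convexOn_perspective hf).2 hp hp' ha.le hb.le hab⟩
  refine convexOn_iff_forall_pos.2 ⟨convex_iff_forall_pos.2 ?_, ?_⟩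
  · exact fun p hp p' hp' a b ha hb hab ↦ (combo hp hp' ha hb hab).1
  · exact fun p hp p' hp' a b ha hb hab ↦ (combo hp hp' ha hb hab).2

end Perspective

theorem ConvexOn.le_of_eq_top_off {E : Type*} [AddCommGroup E] [Module ℝ E] {s : Set E}
    {g : E → ℝ} (hg : ConvexOn ℝ s g) {h : E → EReal}
    (hs : ∀ x ∈ s, h x = g x) (hns : ∀ x ∉ s, h x = ⊤) (x y : E) {t : ℝ} (ht₀ : 0 ≤ t)
    (ht₁ : t ≤ 1) : h (t • x + (1 - t) • y) ≤ t * h x + ((1 - t : ℝ) : EReal) * h y := by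
  rcases ht₀.eq_or_lt with rfl | ht₀
  · simp
  rcases ht₁.eq_or_lt with rfl | ht₁
  · simp
  have hpos : 0 < 1 - t := sub_pos.2 ht₁
  have mul_ne_bot : ∀ {c : ℝ}, 0 < c → ∀ z, (c : EReal) * h z ≠ ⊥ := by
    intro c hc z
    by_cases hz : z ∈ s
    · rw [hs z hz]; exact_mod_cast EReal.coe_ne_bot (c * g z)
    · simp [hns z hz, EReal.coe_mul_top_of_pos hc]
  by_cases hx : x ∈ s
  swap
  · rw [hns x hx, EReal.coe_mul_top_of_pos ht₀, EReal.top_add_of_ne_bot (mul_ne_bot hpos y)]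
    exact le_top
  by_cases hy : y ∈ s
  swap
  · rw [hns y hy, EReal.coe_mul_top_of_pos hpos, EReal.add_top_of_ne_bot (mul_ne_bot ht₀ x)]
    exact le_top
  rw [hs x hx, hs y hy, hs _ (hg.1 hx hy ht₀.le hpos.le (by ring))]
  exact_mod_cast hg.2 hx hy ht₀.le hpos.le (by ring)

section NormRpow

variable {E : Type*} [SeminormedAddCommGroup E] [NormedSpace ℝ E] {q : ℝ}

theorem convexOn_norm_rpow (hq : 1 ≤ q) : ConvexOn ℝ univ fun x : E ↦ ‖x‖ ^ q := by
  refine ⟨convex_univ, fun x _ y _ a b ha hb hab ↦ ?_⟩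
  calc ‖a • x + b • y‖ ^ q ≤ (a • ‖x‖ + b • ‖y‖) ^ q :=
        Real.rpow_le_rpow (norm_nonneg _)
          ((convexOn_norm convex_univ).2 trivial trivial ha hb hab) (by linarith)
    _ ≤ a • ‖x‖ ^ q + b • ‖y‖ ^ q :=
        (convexOn_rpow hq).2 (norm_nonneg x) (norm_nonneg y) ha hb hab

theorem perspective_norm_rpow {m : ℝ} (hm : 0 < m) (w : E) :
    perspective (fun x : E ↦ q⁻¹ • ‖x‖ ^ q) (m, w) = ‖w‖ ^ q / (q * m ^ (q - 1)) := by
  have hmq : m ^ q = m ^ (q - 1) * m := by rw [Real.rpow_sub_one hm.ne']; field_simp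
  have : 0 < m ^ (q - 1) := Real.rpow_pos_of_pos hm _
  simp only [perspective, norm_smul, Real.norm_of_nonneg (inv_nonneg.2 hm.le),
    Real.mul_rpow (inv_nonneg.2 hm.le) (norm_nonneg w), Real.inv_rpow hm.le, hmq, smul_eq_mul]
  field_simp

end NormRpow

theorem stmt_0_general (d : ℕ) (q : ℝ) (hq : 1 < q)
    (b : ℝ × EuclideanSpace ℝ (Fin d) → EReal)
    (hb : ∀ m w, b (m, w) =
      if 0 < m then ((‖w‖ ^ q / (q * m ^ (q - 1)) : ℝ) : EReal)
      else if m = 0 ∧ w = 0 then 0 else ⊤) :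
    ∀ (m₁ m₂ : ℝ) (w₁ w₂ : EuclideanSpace ℝ (Fin d)) (t : ℝ), 0 ≤ t → t ≤ 1 →
      b (t * m₁ + (1 - t) * m₂, t • w₁ + (1 - t) • w₂)
        ≤ (t : EReal) * b (m₁, w₁) + ((1 - t : ℝ) : EReal) * b (m₂, w₂) := by
  have hf := (convexOn_norm_rpow (E := EuclideanSpace ℝ (Fin d)) hq.le).smul
    (inv_nonneg.2 (zero_le_one.trans hq.le))
  have h_mem : ∀ p ∈ insert 0 (perspectiveDomain univ),
      b p = perspective (fun x ↦ q⁻¹ • ‖x‖ ^ q) p := by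
    rintro ⟨m, w⟩ (h0 | ⟨hm, -⟩)
    · obtain ⟨rfl, rfl⟩ := Prod.mk_eq_zero.1 h0
      simp [hb, perspective]
    · rw [hb, if_pos hm, perspective_norm_rpow hm]
  have h_not_mem : ∀ p ∉ insert 0 (perspectiveDomain univ), b p = ⊤ := by
    rintro ⟨m, w⟩ hp
    simp only [mem_insert_iff, Prod.mk_eq_zero, perspectiveDomain, mem_univ, and_true,
      mem_ofPred_eq, not_or] at hp
    rw [hb, if_neg hp.2, if_neg hp.1]
  intro m₁ m₂ w₁ w₂ t ht₀ ht₁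
  exact (convexOn_perspective_insert_zero hf).le_of_eq_top_off h_mem h_not_mem
    (m₁, w₁) (m₂, w₂) ht₀ ht₁

/-- the kinetic-energy-type function `b` is convex on ℝ × ℝ^d. -/
theorem stmt_0 (d : ℕ) (hd : 1 ≤ d) (q : ℝ) (hq : 1 < q)
    (b : ℝ × EuclideanSpace ℝ (Fin d) → EReal)
    (hb : ∀ m w, b (m, w) =
      if 0 < m then ((‖w‖ ^ q / (q * m ^ (q - 1)) : ℝ) : EReal)
      else if m = 0 ∧ w = 0 then 0 else ⊤) :
    ∀ (m₁ m₂ : ℝ) (w₁ w₂ : EuclideanSpace ℝ (Fin d)) (t : ℝ), 0 ≤ t → t ≤ 1 →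
      b (t * m₁ + (1 - t) * m₂, t • w₁ + (1 - t) • w₂)
        ≤ (t : EReal) * b (m₁, w₁) + ((1 - t : ℝ) : EReal) * b (m₂, w₂) :=
  stmt_0_general d q hq b hb
end

section
/- Let T_l ∈ ℝ^{N×N} be the tridiagonal matrix with diagonal (l, 2, 2, …, 2), l ∈ {1, 2}, and off-diagonal entries −1. Then the eigenvalues of T_l are λ_k = 2 − 2cos(π(k − 1 + l/2)/(N + l/2)) for k = 1, …, N. In particular T₂ is positive definite and T₁ is positive definite with smallest eigenvalue 2 − 2cos(π/(2N+1)) > 0. -/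
open Matrix Real

/-!
For any `θ`, the vector `v_j = sin ((N - j) θ)` satisfies every row of `T_l v = (2 - 2 cos θ) v`
except possibly the first, because it obeys the three-term recurrence of `sin` and vanishes at
the phantom index `j = N`. The first row reduces to `sin ((N + 1) θ) = (2 - l) sin (N θ)`, which
holds at `θ_k = π (k + l/2) / (N + l/2)` for `l ∈ {1, 2}`. The angles `θ_k`, `k < N`, lie in
`(0, π)` and are distinct, so these `N` eigenvalues are distinct, positive, and exhaust the
spectrum; the smallest one is at `k = 0`.
-/

theorem Matrix.eigenvalue_mem_range_of_card_le {K n ι : Type*} [Field K] [Fintype n]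
    [Fintype ι] {A : Matrix n n K} {lam : ι → K} (hlam : Function.Injective lam)
    {x : ι → n → K} (hx0 : ∀ i, x i ≠ 0) (hx : ∀ i, A *ᵥ x i = lam i • x i)
    (hcard : Fintype.card n ≤ Fintype.card ι) {μ : K} {y : n → K} (hy0 : y ≠ 0)
    (hy : A *ᵥ y = μ • y) : μ ∈ Set.range lam := by
  rw [Set.mem_range]
  by_contra! hμ
  -- adjoining `y` would give `card ι + 1` eigenvectors with distinct eigenvalues
  have hinj : Function.Injective (fun o : Option ι => o.elim μ lam) := by
    rintro (_ | i) (_ | j) h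
    · rfl
    · exact absurd h.symm (hμ j)
    · exact absurd h (hμ i)
    · exact congrArg some (hlam h)
  have hli := Module.End.eigenvectors_linearIndependent' A.mulVecLin _ hinj
    (fun o : Option ι => o.elim y x) (by
      rintro (_ | i)
      · exact ⟨Module.End.mem_eigenspace_iff.mpr hy, hy0⟩
      · exact ⟨Module.End.mem_eigenspace_iff.mpr (hx i), hx0 i⟩)
  have := hli.fintype_card_le_finrank
  simp only [Fintype.card_option, Module.finrank_fintype_fun_eq_card] at this
  omega

theorem two_sub_two_mul_cos_pos {θ : ℝ} (h0 : 0 < θ) (hπ : θ ≤ π) : 0 < 2 - 2 * cos θ := by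
  have := strictAntiOn_cos ⟨le_rfl, pi_pos.le⟩ ⟨h0.le, hπ⟩ h0
  rw [cos_zero] at this
  linarith

def tridiag (l : ℝ) (N : ℕ) : Matrix (Fin N) (Fin N) ℝ := fun i j =>
  if i = j then (if (i : ℕ) = 0 then l else 2)
  else if (i : ℕ) + 1 = (j : ℕ) ∨ (j : ℕ) + 1 = (i : ℕ) then -1 else 0

namespace tridiag

variable (l : ℝ) (N : ℕ)

theorem isHermitian : (tridiag l N).IsHermitian := by
  ext i j
  simp only [conjTranspose_apply, star_trivial, tridiag, eq_comm (a := j), or_comm]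
  split_ifs <;> simp_all

variable {N}

theorem mulVec_apply (f : ℕ → ℝ) (hf : f N = 0) (i : Fin N) :
    (tridiag l N *ᵥ fun j => f j) i =
      (if (i : ℕ) = 0 then l else 2) * f i - f (i + 1) - if (i : ℕ) = 0 then 0 else f (i - 1) := by
  set d : ℝ := if (i : ℕ) = 0 then l else 2
  have hentry : ∀ j : Fin N, tridiag l N i j * f j =
      (if (i : ℕ) = j then d * f j else 0) - (if (i : ℕ) + 1 = j then f j else 0)
        - (if (i : ℕ) = 0 then 0 else if (i : ℕ) - 1 = j then f j else 0) := by
    intro j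
    simp only [tridiag, d, Fin.ext_iff]
    split_ifs <;> first | omega | ring
  have hsucc : (if (i : ℕ) + 1 < N then f (i + 1) else 0) = f (i + 1) := by
    split_ifs with h
    · rfl
    · rw [show (i : ℕ) + 1 = N by omega, hf]
  rw [mulVec, dotProduct, Finset.sum_congr rfl fun j _ => hentry j,
    Fin.sum_univ_eq_sum_range (fun j => (if (i : ℕ) = j then d * f j else 0)
        - (if (i : ℕ) + 1 = j then f j else 0)
        - (if (i : ℕ) = 0 then 0 else if (i : ℕ) - 1 = j then f j else 0))]
  simp only [Finset.sum_sub_distrib, Finset.sum_ite_irrel, Finset.sum_const_zero,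
    Finset.sum_ite_eq, Finset.mem_range, hsucc, if_pos i.isLt, show (i : ℕ) - 1 < N by omega,
    if_true]

theorem mulVec_eq_smul_of_recurrence {lam : ℝ} (f : ℕ → ℝ) (hleft : l * f 0 - f 1 = lam * f 0)
    (hrec : ∀ j, f j + f (j + 2) = (2 - lam) * f (j + 1)) (hright : f N = 0) :
    (tridiag l N *ᵥ fun j => f j) = lam • fun j : Fin N => f j := by
  funext ⟨i, _⟩
  rw [mulVec_apply l f hright]
  rcases i with _ | m
  · simpa using hleft
  · have := hrec m
    simp only [Nat.add_one_ne_zero, if_false, Nat.add_sub_cancel, Pi.smul_apply, smul_eq_mul]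
    linarith

theorem mulVec_sin {θ : ℝ} (hθ : sin ((N + 1) * θ) = (2 - l) * sin (N * θ)) :
    (tridiag l N *ᵥ fun j => sin ((N - j) * θ)) =
      (2 - 2 * cos θ) • fun j : Fin N => sin ((N - j) * θ) := by
  refine mulVec_eq_smul_of_recurrence l (fun j : ℕ => sin ((N - j) * θ)) ?_ (fun j => ?_)
    (by simp)
  · have h1 : ((N : ℝ) - 1) * θ = N * θ - θ := by ring
    have h2 : ((N : ℝ) + 1) * θ = N * θ + θ := by ring
    rw [h2, sin_add] at hθ
    simp only [Nat.cast_zero, sub_zero, Nat.cast_one, h1, sin_sub]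
    linarith
  · push_cast
    rw [show ((N : ℝ) - j) * θ = (N - (j + 1)) * θ + θ by ring,
      show ((N : ℝ) - (j + 2)) * θ = (N - (j + 1)) * θ - θ by ring, sin_add, sin_sub]
    ring

noncomputable def angle (l : ℝ) (N k : ℕ) : ℝ := π * (k + l / 2) / (N + l / 2)

variable {l}

theorem angle_pos (hl : 0 < l) (k : ℕ) : 0 < angle l N k := by
  unfold angle
  positivity

theorem angle_strictMono (hl : 0 < l) : StrictMono (angle l N) := fun a b hab => by
  unfold angle
  gcongr

theorem angle_lt_pi (hl : 0 < l) {k : ℕ} (hk : k < N) : angle l N k < π := by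
  rw [angle, div_lt_iff₀ (by positivity)]
  gcongr

theorem sin_succ_mul_angle (hl : l = 1 ∨ l = 2) (k : ℕ) :
    sin ((N + 1) * angle l N k) = (2 - l) * sin (N * angle l N k) := by
  rcases hl with rfl | rfl
  · set θ := angle 1 N k with hθ
    have hmid : (N + 1 / 2) * θ = k * π + π / 2 := by
      rw [hθ, angle]
      field_simp
    rw [show ((N : ℝ) + 1) * θ = (k * π + π / 2) + θ / 2 by linarith,
      show (N : ℝ) * θ = (k * π + π / 2) - θ / 2 by linarith, sin_add, sin_sub,
      cos_add_pi_div_two, sin_nat_mul_pi]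
    ring
  · have : ((N : ℝ) + 1) * angle 2 N k = (k + 1 : ℕ) * π := by
      rw [angle]
      field_simp
      push_cast
      ring
    rw [this, sin_nat_mul_pi]
    ring

theorem exists_eigenvector (hl : l = 1 ∨ l = 2) (k : Fin N) :
    ∃ v : Fin N → ℝ, v ≠ 0 ∧ tridiag l N *ᵥ v = (2 - 2 * cos (angle l N k)) • v := by
  have hl0 : 0 < l := by rcases hl with rfl | rfl <;> norm_num
  refine ⟨_, fun h => ?_, mulVec_sin l (sin_succ_mul_angle hl k)⟩
  have hN : 0 < N := k.pos
  have hlast := congrFun h ⟨N - 1, by omega⟩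
  simp only [Nat.cast_pred hN, sub_sub_cancel, one_mul, Pi.zero_apply] at hlast
  exact (sin_pos_of_pos_of_lt_pi (angle_pos hl0 k) (angle_lt_pi hl0 k.isLt)).ne' hlast

theorem eigenvalue_injective (hl : 0 < l) :
    Function.Injective fun k : Fin N => 2 - 2 * cos (angle l N k) := by
  intro a b h
  have hmem (k : Fin N) : angle l N k ∈ Set.Icc 0 π :=
    ⟨(angle_pos hl k).le, (angle_lt_pi hl k.isLt).le⟩
  have hcos : cos (angle l N a) = cos (angle l N b) := by simp only at h; linarith
  exact Fin.ext ((angle_strictMono hl).injective (injOn_cos (hmem a) (hmem b) hcos))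

theorem exists_eigenvalue_eq (hl : l = 1 ∨ l = 2) {μ : ℝ} {v : Fin N → ℝ} (hv : v ≠ 0)
    (h : tridiag l N *ᵥ v = μ • v) : ∃ k : Fin N, 2 - 2 * cos (angle l N k) = μ := by
  have hl0 : 0 < l := by rcases hl with rfl | rfl <;> norm_num
  choose x hx0 hx using exists_eigenvector hl
  exact eigenvalue_mem_range_of_card_le (eigenvalue_injective hl0) hx0 hx le_rfl hv h

theorem posDef (hl : l = 1 ∨ l = 2) : (tridiag l N).PosDef := by
  have hl0 : 0 < l := by rcases hl with rfl | rfl <;> norm_num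
  have hA := isHermitian l N
  refine hA.posDef_iff_eigenvalues_pos.mpr fun i => ?_
  have hv : ⇑(hA.eigenvectorBasis i) ≠ 0 := by
    simpa only [ne_eq, WithLp.ofLp_eq_zero] using hA.eigenvectorBasis.orthonormal.ne_zero i
  obtain ⟨k, hk⟩ := exists_eigenvalue_eq hl hv (hA.mulVec_eigenvectorBasis i)
  rw [← hk]
  exact two_sub_two_mul_cos_pos (angle_pos hl0 k) (angle_lt_pi hl0 k.isLt).le

end tridiag

theorem stmt_17_general (N : ℕ) (l : ℝ) (hl : l = 1 ∨ l = 2)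
    (T : Matrix (Fin N) (Fin N) ℝ)
    (hT : ∀ i j, T i j =
      if i = j then (if (i : ℕ) = 0 then l else 2)
      else if (i : ℕ) + 1 = (j : ℕ) ∨ (j : ℕ) + 1 = (i : ℕ) then -1 else 0) :
    (∀ k : Fin N, ∃ v : Fin N → ℝ, v ≠ 0 ∧
      T *ᵥ v = (2 - 2 * Real.cos (π * (((k : ℕ) + 1 : ℝ) - 1 + l / 2) / (N + l / 2))) • v) ∧
    T.PosDef ∧
    (l = 1 → (0 < 2 - 2 * Real.cos (π / (2 * N + 1)) ∧
      ∀ (μ : ℝ) (v : Fin N → ℝ), v ≠ 0 → T *ᵥ v = μ • v →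
        2 - 2 * Real.cos (π / (2 * N + 1)) ≤ μ)) := by
  obtain rfl : T = tridiag l N := Matrix.ext hT
  refine ⟨fun k => ?_, tridiag.posDef hl, ?_⟩
  · rw [add_sub_cancel_right]
    exact tridiag.exists_eigenvector hl k
  · rintro rfl
    have hpos : 0 < π / (2 * N + 1) := by positivity
    have hle : π / (2 * N + 1) ≤ π := div_le_self pi_pos.le (by linarith [N.cast_nonneg (α := ℝ)])
    refine ⟨two_sub_two_mul_cos_pos hpos hle, fun μ v hv h => ?_⟩
    have hbottom : π / (2 * N + 1) = tridiag.angle 1 N 0 := by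
      rw [tridiag.angle]
      field_simp
      ring
    obtain ⟨k, rfl⟩ := tridiag.exists_eigenvalue_eq (Or.inl rfl) hv h
    rw [hbottom]
    gcongr 2 - 2 * ?_
    exact cos_le_cos_of_nonneg_of_le_pi (tridiag.angle_pos one_pos 0).le
      (tridiag.angle_lt_pi one_pos k.isLt).le
      ((tridiag.angle_strictMono one_pos).monotone (Nat.zero_le k))

/-- the tridiagonal matrix `T_l` with diagonal `(l,2,…,2)`, `l ∈ {1,2}`,
and off-diagonals `−1` has eigenvalues `λ_k = 2 − 2cos(π(k−1+l/2)/(N+l/2))`,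
`k = 1,…,N`; it is positive definite, and for `l = 1` every eigenvalue is at least
`2 − 2cos(π/(2N+1)) > 0`. -/
theorem stmt_17 (N : ℕ) (hN : 0 < N) (l : ℝ) (hl : l = 1 ∨ l = 2)
    (T : Matrix (Fin N) (Fin N) ℝ)
    (hT : ∀ i j, T i j =
      if i = j then (if (i : ℕ) = 0 then l else 2)
      else if (i : ℕ) + 1 = (j : ℕ) ∨ (j : ℕ) + 1 = (i : ℕ) then -1 else 0) :
    (∀ k : Fin N, ∃ v : Fin N → ℝ, v ≠ 0 ∧
      T *ᵥ v = (2 - 2 * Real.cos (π * (((k : ℕ) + 1 : ℝ) - 1 + l / 2) / (N + l / 2))) • v) ∧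
    T.PosDef ∧
    (l = 1 → (0 < 2 - 2 * Real.cos (π / (2 * N + 1)) ∧
      ∀ (μ : ℝ) (v : Fin N → ℝ), v ≠ 0 → T *ᵥ v = μ • v →
        2 - 2 * Real.cos (π / (2 * N + 1)) ≤ μ)) :=
  stmt_17_general N l hl T hT
end

section
/- Let σ, τ₀ > 0 with σ₀ = τ₀, γ > 0, and define recursively θ_{ℓ+1} = 1/√(1 + 2γτ_ℓ), τ_{ℓ+1} = θ_{ℓ+1}τ_ℓ, σ_{ℓ+1} = σ_ℓ/θ_{ℓ+1}. Then for all ℓ ≥ 0: θ_{ℓ+1} ∈ (0,1), τ_ℓ > 0, σ_ℓ > 0, and σ_ℓ τ_ℓ = σ₀τ₀ is constant; moreover τ_ℓ is strictly decreasing and τ_ℓ → 0 with τ_ℓ = O(1/ℓ) as ℓ → ∞. -/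
open Filter

/-- properties of the accelerated Chambolle–Pock parameter updates
`θ_{ℓ+1} = 1/√(1+2γτ_ℓ)`, `τ_{ℓ+1} = θ_{ℓ+1}τ_ℓ`, `σ_{ℓ+1} = σ_ℓ/θ_{ℓ+1}`. -/
theorem stmt_18 (γ : ℝ) (hγ : 0 < γ) (θ τ σ : ℕ → ℝ)
    (hτ0 : 0 < τ 0) (hσ0 : σ 0 = τ 0)
    (hθ : ∀ ℓ, θ (ℓ + 1) = 1 / Real.sqrt (1 + 2 * γ * τ ℓ))
    (hτ : ∀ ℓ, τ (ℓ + 1) = θ (ℓ + 1) * τ ℓ)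
    (hσ : ∀ ℓ, σ (ℓ + 1) = σ ℓ / θ (ℓ + 1)) :
    (∀ ℓ, 0 < θ (ℓ + 1) ∧ θ (ℓ + 1) < 1) ∧
    (∀ ℓ, 0 < τ ℓ) ∧ (∀ ℓ, 0 < σ ℓ) ∧
    (∀ ℓ, σ ℓ * τ ℓ = σ 0 * τ 0) ∧
    (∀ ℓ, τ (ℓ + 1) < τ ℓ) ∧
    Tendsto τ atTop (nhds 0) ∧
    (∃ c : ℝ, 0 < c ∧ ∀ ℓ : ℕ, 1 ≤ ℓ → τ ℓ ≤ c / ℓ) := by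
  -- positivity of τ
  have hτpos : ∀ ℓ, 0 < τ ℓ := by
    intro ℓ
    induction ℓ with
    | zero => exact hτ0
    | succ n ih =>
      rw [hτ n, hθ n]
      have h1 : 0 < Real.sqrt (1 + 2 * γ * τ n) :=
        Real.sqrt_pos.mpr (by nlinarith)
      positivity
  -- sqrt > 1
  have hs : ∀ ℓ, 1 < Real.sqrt (1 + 2 * γ * τ ℓ) := by
    intro ℓ
    have h := hτpos ℓ
    have : Real.sqrt 1 < Real.sqrt (1 + 2 * γ * τ ℓ) :=
      Real.sqrt_lt_sqrt (by norm_num) (by nlinarith)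
    simpa using this
  have hθ01 : ∀ ℓ, 0 < θ (ℓ + 1) ∧ θ (ℓ + 1) < 1 := by
    intro ℓ
    rw [hθ ℓ]
    constructor
    · have := hs ℓ; positivity
    · rw [div_lt_one (lt_trans one_pos (hs ℓ))]; exact hs ℓ
  have hσpos : ∀ ℓ, 0 < σ ℓ := by
    intro ℓ
    induction ℓ with
    | zero => rw [hσ0]; exact hτ0
    | succ n ih =>
      rw [hσ n]
      exact div_pos ih (hθ01 n).1
  have hprod : ∀ ℓ, σ ℓ * τ ℓ = σ 0 * τ 0 := by
    intro ℓ
    induction ℓ with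
    | zero => rfl
    | succ n ih =>
      rw [hσ n, hτ n, ← ih]
      have hθne : θ (n + 1) ≠ 0 := ne_of_gt (hθ01 n).1
      field_simp
  have hdec : ∀ ℓ, τ (ℓ + 1) < τ ℓ := by
    intro ℓ
    rw [hτ ℓ]
    have h1 := (hθ01 ℓ).2
    have h2 := hτpos ℓ
    nlinarith
  -- τ ℓ ≤ τ 0
  have hle0 : ∀ ℓ, τ ℓ ≤ τ 0 := by
    intro ℓ
    induction ℓ with
    | zero => exact le_rfl
    | succ n ih => exact le_trans (le_of_lt (hdec n)) ih
  set K := Real.sqrt (1 + 2 * γ * τ 0) + 1 with hKdef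
  have hKpos : 0 < K := by have := hs 0; positivity
  -- inverse growth
  have hinv : ∀ ℓ, 1 / τ 0 + ℓ * (2 * γ / K) ≤ 1 / τ ℓ := by
    intro ℓ
    induction ℓ with
    | zero => simp
    | succ n ih =>
      set a := Real.sqrt (1 + 2 * γ * τ n) with hadef
      have ha1 : 1 < a := hs n
      have ha2 : a ^ 2 = 1 + 2 * γ * τ n := by
        rw [hadef]
        exact Real.sq_sqrt (by nlinarith [hτpos n])
      have hτn := hτpos n
      have hstep : 1 / τ (n + 1) = 1 / τ n + 2 * γ / (a + 1) := by
        rw [hτ n, hθ n, ← hadef]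
        have hane : a ≠ 0 := by linarith
        have hane1 : a + 1 ≠ 0 := by linarith
        field_simp
        nlinarith [ha2]
      have haK : a + 1 ≤ K := by
        have : a ≤ Real.sqrt (1 + 2 * γ * τ 0) :=
          Real.sqrt_le_sqrt (by nlinarith [hle0 n])
        rw [hKdef]; linarith
      have hKle : 2 * γ / K ≤ 2 * γ / (a + 1) := by
        gcongr
      rw [hstep]
      push_cast
      linarith
  refine ⟨hθ01, hτpos, hσpos, hprod, hdec, ?_, ?_⟩
  · -- tendsto
    have hbound : ∀ ℓ : ℕ, 1 ≤ ℓ → τ ℓ ≤ (K / (2 * γ)) / ℓ := by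
      intro ℓ hℓ
      have hℓpos : (0 : ℝ) < ℓ := by exact_mod_cast hℓ
      have h1 : (ℓ : ℝ) * (2 * γ / K) ≤ 1 / τ ℓ := by
        have := hinv ℓ
        have h0 : 0 < 1 / τ 0 := by positivity
        linarith
      have h2 : 0 < (ℓ : ℝ) * (2 * γ / K) := by positivity
      have h3 : 1 / (1 / τ ℓ) ≤ 1 / ((ℓ : ℝ) * (2 * γ / K)) :=
        one_div_le_one_div_of_le h2 h1
      rw [one_div_one_div] at h3
      have h4 : 1 / ((ℓ : ℝ) * (2 * γ / K)) = (K / (2 * γ)) / ℓ := by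
        rw [← mul_div_assoc, mul_comm ((ℓ : ℝ)) (2 * γ), one_div_div, div_div]
      rwa [h4] at h3
    have hlim : Tendsto (fun ℓ : ℕ => (K / (2 * γ)) / (ℓ : ℝ)) atTop (nhds 0) :=
      tendsto_const_div_atTop_nhds_zero_nat _
    apply squeeze_zero' (Eventually.of_forall fun ℓ => (hτpos ℓ).le)
      ?_ hlim
    filter_upwards [eventually_ge_atTop 1] with ℓ hℓ
    exact hbound ℓ hℓ
  · refine ⟨K / (2 * γ), by positivity, ?_⟩
    intro ℓ hℓ
    have hℓpos : (0 : ℝ) < ℓ := by exact_mod_cast hℓ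
    have h1 : (ℓ : ℝ) * (2 * γ / K) ≤ 1 / τ ℓ := by
      have := hinv ℓ
      have h0 : 0 < 1 / τ 0 := by positivity
      linarith
    have h2 : 0 < (ℓ : ℝ) * (2 * γ / K) := by positivity
    have h3 : 1 / (1 / τ ℓ) ≤ 1 / ((ℓ : ℝ) * (2 * γ / K)) :=
      one_div_le_one_div_of_le h2 h1
    rw [one_div_one_div] at h3
    have h4 : 1 / ((ℓ : ℝ) * (2 * γ / K)) = (K / (2 * γ)) / ℓ := by
      rw [← mul_div_assoc, mul_comm ((ℓ : ℝ)) (2 * γ), one_div_div, div_div]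
    rwa [h4] at h3
end
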